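/- Let $p = 2k$ be an even integer with $k \geq 2$. Let $\hat{\sigma}, \hat{\omega}$ be weights on $\mathbb{R}$ and define $\sigma(x_1, x_2) = \hat{\sigma}(x_1)$, $\omega(x_1, x_2) = \hat{\omega}(x_1)$ on $\mathbb{R}^2$. Let $\mathcal{E} = \{ I_1 \times [0, \ell(I_1)) : I_1 \in \mathcal{D}([0,1)) \}$ and for $I = I_1 \times I_2 \in \mathcal{E}$ let $J(I) = I_1 \times [10\ell(I_1), 10\ell(I_1) + 100)$. Then the rectangular quadratic Muckenhoupt characteristic equals, up to constants depending only on $p$, the one-dimensional quadratic Muckenhoupt characteristic: $A_p^{\ell^2, \mathrm{rectangular}, \mathcal{E}}(\sigma, \omega) \approx A_p^{\ell^2, \mathrm{local}, \mathcal{D}([0,1))}(\hat{\sigma}, \hat{\omega})$. -/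

import Mathlib

/-!
On the horizontal line at height `x₂` the rectangle `J(I)` cuts out `I₁` when
`10 ℓ(I₁) ≤ x₂ < 10 ℓ(I₁) + 100` and nothing otherwise, and averages over `I₁ × [0, ℓ(I₁))` of a
weight depending only on `x₁` are its averages over `I₁`. So by Tonelli every rectangular
square-function integral is the integral over `x₂` of one-dimensional ones, with the coefficients
of the inactive generations set to zero. Applying the one-dimensional inequality on each line gives
`A^{rect} ≤ A^{1d}`. Conversely all generations are active for `x₂ ∈ [10, 100)` and none is active
outside `[0, 110)`, which gives `A^{1d} ≤ (110 / 90)^{1/p} A^{rect}`.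
-/

open MeasureTheory Set ENNReal

/-- Index type for the dyadic subintervals of `[0,1)`. -/
def DyIdx : Type := {q : ℕ × ℕ // q.2 < 2 ^ q.1}

/-- The sidelength `2^{-t}` of the dyadic interval of generation `t`. -/
noncomputable def dyLen (i : DyIdx) : ℝ := (2 : ℝ) ^ (-(i.1.1 : ℤ))

/-- The dyadic subinterval `[j 2^{-t}, (j+1) 2^{-t}) ⊆ [0,1)`. -/
noncomputable def dyIco (i : DyIdx) : Set ℝ :=
  Set.Ico ((i.1.2 : ℝ) * dyLen i) (((i.1.2 : ℝ) + 1) * dyLen i)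

/-- The square `I₁ × [0, ℓ(I₁))` of the collection `ℰ`. -/
noncomputable def sqE (i : DyIdx) : Set (ℝ × ℝ) := dyIco i ×ˢ Set.Ico (0 : ℝ) (dyLen i)

/-- The associated rectangle `J(I) = I₁ × [10ℓ(I₁), 10ℓ(I₁)+100)`. -/
noncomputable def rectJ (i : DyIdx) : Set (ℝ × ℝ) :=
  dyIco i ×ˢ Set.Ico (10 * dyLen i) (10 * dyLen i + 100)

/-- `E_I μ` for the weight `μ̂(x₁)` on the plane, over the square `sqE i`. -/
noncomputable def EsqE (μh : ℝ → ℝ≥0∞) (i : DyIdx) : ℝ≥0∞ :=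
  (∫⁻ y in sqE i, μh y.1 ∂volume) / volume (sqE i)

/-- `E_I μ̂` over the dyadic interval `dyIco i` on the line. -/
noncomputable def E1d (μh : ℝ → ℝ≥0∞) (i : DyIdx) : ℝ≥0∞ :=
  (∫⁻ x in dyIco i, μh x ∂volume) / volume (dyIco i)

/-- The rectangular quadratic Muckenhoupt characteristic
`A_p^{ℓ²,rectangular,ℰ}(σ,ω)` for the tensored weights `σ(x) = σ̂(x₁)`,
`ω(x) = ω̂(x₁)`, as the supremum of the relevant ratios. -/
noncomputable def ArectChar (p : ℝ) (σh ωh : ℝ → ℝ≥0∞) : ℝ≥0∞ :=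
  ⨆ a : DyIdx → ℝ,
    (∫⁻ x : ℝ × ℝ,
        (∑' i : DyIdx, ENNReal.ofReal ((a i) ^ 2) * (EsqE σh i) ^ 2 *
          (rectJ i).indicator (fun _ => (1 : ℝ≥0∞)) x) ^ (p / 2) * ωh x.1 ∂volume) ^ (1 / p) /
    (∫⁻ x : ℝ × ℝ,
        (∑' i : DyIdx, ENNReal.ofReal ((a i) ^ 2) *
          (rectJ i).indicator (fun _ => (1 : ℝ≥0∞)) x) ^ (p / 2) * σh x.1 ∂volume) ^ (1 / p)

/-- The one-dimensional local quadratic Muckenhoupt characteristic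
`A_p^{ℓ²,local,𝒟([0,1))}(σ̂,ω̂)`, as the supremum of the relevant ratios. -/
noncomputable def A1dChar (p : ℝ) (σh ωh : ℝ → ℝ≥0∞) : ℝ≥0∞ :=
  ⨆ a : DyIdx → ℝ,
    (∫⁻ x : ℝ,
        (∑' i : DyIdx, ENNReal.ofReal ((a i) ^ 2) * (E1d σh i) ^ 2 *
          (dyIco i).indicator (fun _ => (1 : ℝ≥0∞)) x) ^ (p / 2) * ωh x ∂volume) ^ (1 / p) /
    (∫⁻ x : ℝ,
        (∑' i : DyIdx, ENNReal.ofReal ((a i) ^ 2) *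
          (dyIco i).indicator (fun _ => (1 : ℝ≥0∞)) x) ^ (p / 2) * σh x ∂volume) ^ (1 / p)

namespace ENNReal

lemma rpow_one_div_le_mul_rpow_one_div_iff {p : ℝ} (hp : 0 < p) {N D A : ℝ≥0∞} :
    N ^ (1 / p) ≤ A * D ^ (1 / p) ↔ N ≤ A ^ p * D := by
  rw [one_div, rpow_inv_le_iff hp, mul_rpow_of_nonneg _ _ hp.le, ← rpow_mul,
    inv_mul_cancel₀ hp.ne', rpow_one]

lemma rpow_one_div_div_le_of_le_rpow_mul {p : ℝ} (hp : 0 < p) {N D A : ℝ≥0∞}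
    (h : N ≤ A ^ p * D) : N ^ (1 / p) / D ^ (1 / p) ≤ A :=
  div_le_of_le_mul ((rpow_one_div_le_mul_rpow_one_div_iff hp).2 h)

lemma le_rpow_mul_of_rpow_one_div_div_le {p : ℝ} (hp : 0 < p) {N D A : ℝ≥0∞} (hA : A ≠ ∞)
    (hD : D ≠ ∞) (h : N ^ (1 / p) / D ^ (1 / p) ≤ A) : N ≤ A ^ p * D := by
  have hD' : D ^ (1 / p) ≠ ∞ := rpow_ne_top_of_nonneg (by positivity) hD
  exact (rpow_one_div_le_mul_rpow_one_div_iff hp).1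
    ((ENNReal.div_le_iff_le_mul (Or.inr hA) (Or.inl hD')).1 h)

lemma div_le_div_mul_div {a b N D N' D' : ℝ≥0∞} (ha₀ : a ≠ 0) (ha : a ≠ ∞) (hb₀ : b ≠ 0)
    (hb : b ≠ ∞) (hN : a * N ≤ N') (hD : D' ≤ b * D) : N / D ≤ b / a * (N' / D') :=
  calc N / D ≤ (N' / a) / (D' / b) := by
        gcongr
        · exact (ENNReal.le_div_iff_mul_le (Or.inl ha₀) (Or.inl ha)).2 (by rwa [mul_comm])
        · exact div_le_of_le_mul (by rwa [mul_comm])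
    _ = b / a * (N' / D') := by
        simp only [div_eq_mul_inv, ENNReal.mul_inv (Or.inr (inv_ne_top.2 hb₀))
          (Or.inr (ENNReal.inv_ne_zero.2 hb)), inv_inv]
        ring

end ENNReal

instance : Countable DyIdx := inferInstanceAs (Countable {q : ℕ × ℕ // q.2 < 2 ^ q.1})

lemma dyLen_pos (i : DyIdx) : 0 < dyLen i := zpow_pos (by norm_num) _

lemma dyLen_le_one (i : DyIdx) : dyLen i ≤ 1 := zpow_le_one_of_nonpos₀ (by norm_num) (by simp)

lemma EsqE_eq_E1d {μh : ℝ → ℝ≥0∞} (hμ : Measurable μh) : EsqE μh = E1d μh := by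
  funext i
  have hℓ : ENNReal.ofReal (dyLen i) ≠ 0 := by simp [dyLen_pos i]
  have hvol : volume (sqE i) = volume (dyIco i) * ENNReal.ofReal (dyLen i) := by
    rw [sqE, Measure.volume_eq_prod, Measure.prod_prod, Real.volume_Ico, sub_zero]
  have hint : ∫⁻ y in sqE i, μh y.1 = (∫⁻ x in dyIco i, μh x) * ENNReal.ofReal (dyLen i) := by
    rw [sqE, Measure.volume_eq_prod, ← Measure.prod_restrict,
      lintegral_prod (fun y : ℝ × ℝ => μh y.1) (hμ.comp measurable_fst).aemeasurable]
    simp only [lintegral_const, Measure.restrict_apply_univ, Real.volume_Ico, sub_zero]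
    exact lintegral_mul_const _ hμ
  rw [EsqE, E1d, hint, hvol, ENNReal.mul_div_mul_right _ _ hℓ ofReal_ne_top]

noncomputable def sqCoeff (a : DyIdx → ℝ) (i : DyIdx) : ℝ≥0∞ := ENNReal.ofReal (a i ^ 2)

lemma indicator_sqCoeff_mul (s : Set DyIdx) (a : DyIdx → ℝ) (f : DyIdx → ℝ≥0∞) :
    s.indicator (sqCoeff a * f) = sqCoeff (s.indicator a) * f := by
  funext i
  by_cases hi : i ∈ s <;> simp [hi, sqCoeff]

lemma indicator_sqCoeff (s : Set DyIdx) (a : DyIdx → ℝ) :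
    s.indicator (sqCoeff a) = sqCoeff (s.indicator a) := by
  simpa using indicator_sqCoeff_mul s a 1

noncomputable def lineNormPow (p : ℝ) (w : ℝ → ℝ≥0∞) (c : DyIdx → ℝ≥0∞) : ℝ≥0∞ :=
  ∫⁻ x, (∑' i, c i * (dyIco i).indicator (fun _ => 1) x) ^ (p / 2) * w x

noncomputable def planeNormPow (p : ℝ) (w : ℝ → ℝ≥0∞) (c : DyIdx → ℝ≥0∞) : ℝ≥0∞ :=
  ∫⁻ x : ℝ × ℝ, (∑' i, c i * (rectJ i).indicator (fun _ => 1) x) ^ (p / 2) * w x.1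

lemma A1dChar_eq_iSup (p : ℝ) (σh ωh : ℝ → ℝ≥0∞) :
    A1dChar p σh ωh = ⨆ a, lineNormPow p ωh (sqCoeff a * E1d σh ^ 2) ^ (1 / p) /
      lineNormPow p σh (sqCoeff a) ^ (1 / p) := rfl

lemma ArectChar_eq_iSup (p : ℝ) {σh : ℝ → ℝ≥0∞} (hσ : Measurable σh) (ωh : ℝ → ℝ≥0∞) :
    ArectChar p σh ωh = ⨆ a, planeNormPow p ωh (sqCoeff a * E1d σh ^ 2) ^ (1 / p) /
      planeNormPow p σh (sqCoeff a) ^ (1 / p) := by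
  rw [← EsqE_eq_E1d hσ]
  rfl

lemma lineNormPow_mono {p : ℝ} (hp : 0 ≤ p) (w : ℝ → ℝ≥0∞) {c c' : DyIdx → ℝ≥0∞}
    (h : c ≤ c') : lineNormPow p w c ≤ lineNormPow p w c' := by
  refine lintegral_mono fun x => mul_le_mul_left (rpow_le_rpow ?_ (by linarith)) _
  exact ENNReal.tsum_le_tsum fun i => mul_le_mul_left (h i) _

lemma lineNormPow_zero {p : ℝ} (hp : 0 < p) (w : ℝ → ℝ≥0∞) : lineNormPow p w 0 = 0 := by
  simp [lineNormPow, zero_rpow_of_pos (half_pos hp)]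

/-- The generations `i` whose rectangle `rectJ i` meets the horizontal line at height `t`. -/
def activeGen (t : ℝ) : Set DyIdx := {i | t ∈ Ico (10 * dyLen i) (10 * dyLen i + 100)}

lemma activeGen_eq_univ {t : ℝ} (ht : t ∈ Ico (10 : ℝ) 100) : activeGen t = univ := by
  refine eq_univ_of_forall fun i => ?_
  have := dyLen_pos i
  have := dyLen_le_one i
  exact ⟨by linarith [ht.1], by linarith [ht.2]⟩

lemma activeGen_eq_empty {t : ℝ} (ht : t ∉ Ico (0 : ℝ) 110) : activeGen t = ∅ := by
  refine eq_empty_of_forall_notMem fun i hi => ht ?_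
  have := dyLen_pos i
  have := dyLen_le_one i
  exact ⟨by linarith [hi.1], by linarith [hi.2]⟩

lemma mul_indicator_rectJ (c : DyIdx → ℝ≥0∞) (i : DyIdx) (x₁ t : ℝ) :
    c i * (rectJ i).indicator (fun _ => 1) (x₁, t) =
      (activeGen t).indicator c i * (dyIco i).indicator (fun _ => 1) x₁ := by
  by_cases ht : i ∈ activeGen t <;> by_cases hx : x₁ ∈ dyIco i <;>
    simp_all [rectJ, indicator, activeGen]

lemma measurable_planeNormPow_integrand (p : ℝ) {w : ℝ → ℝ≥0∞} (hw : Measurable w)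
    (c : DyIdx → ℝ≥0∞) :
    Measurable fun x : ℝ × ℝ =>
      (∑' i, c i * (rectJ i).indicator (fun _ => 1) x) ^ (p / 2) * w x.1 :=
  ((Measurable.tsum fun _ => (measurable_const.indicator
    (measurableSet_Ico.prod measurableSet_Ico)).const_mul _).pow_const _).mul
    (hw.comp measurable_fst)

lemma lineNormPow_indicator_activeGen (p : ℝ) (w : ℝ → ℝ≥0∞) (c : DyIdx → ℝ≥0∞) (t : ℝ) :
    lineNormPow p w ((activeGen t).indicator c) =
      ∫⁻ x₁, (∑' i, c i * (rectJ i).indicator (fun _ => 1) (x₁, t)) ^ (p / 2) * w x₁ := by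
  simp only [lineNormPow, mul_indicator_rectJ]

lemma measurable_lineNormPow_indicator_activeGen (p : ℝ) {w : ℝ → ℝ≥0∞} (hw : Measurable w)
    (c : DyIdx → ℝ≥0∞) : Measurable fun t => lineNormPow p w ((activeGen t).indicator c) := by
  simp only [lineNormPow_indicator_activeGen]
  exact (measurable_planeNormPow_integrand p hw c).lintegral_prod_left'

lemma planeNormPow_eq_lintegral (p : ℝ) {w : ℝ → ℝ≥0∞} (hw : Measurable w)
    (c : DyIdx → ℝ≥0∞) :
    planeNormPow p w c = ∫⁻ t, lineNormPow p w ((activeGen t).indicator c) := by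
  rw [planeNormPow, Measure.volume_eq_prod,
    lintegral_prod_symm' _ (measurable_planeNormPow_integrand p hw c)]
  simp only [lineNormPow_indicator_activeGen]

lemma lineNormPow_le_A1dChar_rpow_mul {p : ℝ} (hp : 0 < p) {σh ωh : ℝ → ℝ≥0∞}
    (hA : A1dChar p σh ωh ≠ ∞) {a : DyIdx → ℝ} (ha : lineNormPow p σh (sqCoeff a) ≠ ∞) :
    lineNormPow p ωh (sqCoeff a * E1d σh ^ 2) ≤
      A1dChar p σh ωh ^ p * lineNormPow p σh (sqCoeff a) :=
  le_rpow_mul_of_rpow_one_div_div_le hp hA ha <| le_iSup (fun b =>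
    lineNormPow p ωh (sqCoeff b * E1d σh ^ 2) ^ (1 / p) / lineNormPow p σh (sqCoeff b) ^ (1 / p)) a

lemma ArectChar_le_A1dChar {p : ℝ} (hp : 0 < p) {σh ωh : ℝ → ℝ≥0∞} (hσ : Measurable σh)
    (hω : Measurable ωh) : ArectChar p σh ωh ≤ A1dChar p σh ωh := by
  rcases eq_or_ne (A1dChar p σh ωh) ∞ with hA | hA
  · rw [hA]
    exact le_top
  rw [ArectChar_eq_iSup p hσ]
  refine iSup_le fun a => ?_
  rcases eq_or_ne (planeNormPow p σh (sqCoeff a)) ∞ with hD | hD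
  · rw [hD, top_rpow_of_pos (one_div_pos.2 hp), div_top]
    exact zero_le
  refine rpow_one_div_div_le_of_le_rpow_mul hp ?_
  rw [planeNormPow_eq_lintegral p hσ] at hD ⊢
  rw [planeNormPow_eq_lintegral p hω,
    ← lintegral_const_mul _ (measurable_lineNormPow_indicator_activeGen p hσ _)]
  have hfin : ∀ᵐ t, lineNormPow p σh ((activeGen t).indicator (sqCoeff a)) ≠ ∞ :=
    (ae_lt_top (measurable_lineNormPow_indicator_activeGen p hσ _) hD).mono fun _ => ne_of_lt
  refine lintegral_mono_ae (hfin.mono fun t ht => ?_)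
  rw [indicator_sqCoeff] at ht ⊢
  rw [indicator_sqCoeff_mul]
  exact lineNormPow_le_A1dChar_rpow_mul hp hA ht

lemma mul_lineNormPow_le_planeNormPow (p : ℝ) {w : ℝ → ℝ≥0∞} (hw : Measurable w)
    (c : DyIdx → ℝ≥0∞) : 90 * lineNormPow p w c ≤ planeNormPow p w c := by
  rw [planeNormPow_eq_lintegral p hw]
  calc 90 * lineNormPow p w c
      = ∫⁻ t in Ico (10 : ℝ) 100, lineNormPow p w ((activeGen t).indicator c) := by
        rw [setLIntegral_congr_fun measurableSet_Ico
          (fun t ht => by rw [activeGen_eq_univ ht, indicator_univ]),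
          setLIntegral_const, Real.volume_Ico, mul_comm]
        norm_num
    _ ≤ _ := setLIntegral_le_lintegral _ _

lemma planeNormPow_le_mul_lineNormPow {p : ℝ} (hp : 0 < p) {w : ℝ → ℝ≥0∞} (hw : Measurable w)
    (c : DyIdx → ℝ≥0∞) : planeNormPow p w c ≤ 110 * lineNormPow p w c := by
  rw [planeNormPow_eq_lintegral p hw]
  calc ∫⁻ t, lineNormPow p w ((activeGen t).indicator c)
      ≤ ∫⁻ t, (Ico (0 : ℝ) 110).indicator (fun _ => lineNormPow p w c) t := by
        refine lintegral_mono fun t => ?_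
        by_cases ht : t ∈ Ico (0 : ℝ) 110
        · rw [indicator_of_mem ht]
          exact lineNormPow_mono hp.le w (indicator_le_self _ _)
        · rw [indicator_of_notMem ht, activeGen_eq_empty ht, indicator_empty]
          exact (lineNormPow_zero hp w).le
    _ = 110 * lineNormPow p w c := by
        rw [lintegral_indicator_const measurableSet_Ico, Real.volume_Ico, mul_comm]
        norm_num

lemma A1dChar_le_rpow_mul_ArectChar {p : ℝ} (hp : 0 < p) {σh ωh : ℝ → ℝ≥0∞}
    (hσ : Measurable σh) (hω : Measurable ωh) :
    A1dChar p σh ωh ≤ (110 / 90) ^ (1 / p) * ArectChar p σh ωh := by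
  have hr : 0 ≤ 1 / p := by positivity
  rw [A1dChar_eq_iSup, ArectChar_eq_iSup p hσ]
  refine iSup_le fun a => ?_
  set N := lineNormPow p ωh (sqCoeff a * E1d σh ^ 2)
  set D := lineNormPow p σh (sqCoeff a)
  set N' := planeNormPow p ωh (sqCoeff a * E1d σh ^ 2)
  set D' := planeNormPow p σh (sqCoeff a)
  have hratio : N / D ≤ 110 / 90 * (N' / D') :=
    div_le_div_mul_div (by norm_num) (by norm_num) (by norm_num) (by norm_num)
      (mul_lineNormPow_le_planeNormPow p hω _) (planeNormPow_le_mul_lineNormPow hp hσ _)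
  calc N ^ (1 / p) / D ^ (1 / p) = (N / D) ^ (1 / p) := (div_rpow_of_nonneg _ _ hr).symm
    _ ≤ (110 / 90 * (N' / D')) ^ (1 / p) := rpow_le_rpow hratio hr
    _ = (110 / 90) ^ (1 / p) * (N' ^ (1 / p) / D' ^ (1 / p)) := by
        rw [mul_rpow_of_nonneg _ _ hr, div_rpow_of_nonneg N' D' hr]
    _ ≤ _ := by
        gcongr
        exact le_iSup (fun b => planeNormPow p ωh (sqCoeff b * E1d σh ^ 2) ^ (1 / p) /
          planeNormPow p σh (sqCoeff b) ^ (1 / p)) a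

lemma rpow_one_div_le_two {p : ℝ} (hp : 1 ≤ p) : (110 / 90 : ℝ≥0∞) ^ (1 / p) ≤ 2 :=
  calc (110 / 90 : ℝ≥0∞) ^ (1 / p) ≤ (110 / 90) ^ (1 : ℝ) :=
        rpow_le_rpow_of_exponent_le
          ((ENNReal.le_div_iff_mul_le (by simp) (by simp)).2 (by norm_num))
          ((div_le_one (by linarith)).2 hp)
    _ ≤ 2 := by
        rw [rpow_one]
        exact div_le_of_le_mul (by norm_num)

/-- For `p = 2k` an even integer `≥ 4`, the rectangular quadratic Muckenhoupt
characteristic of the tensored weights is comparable, with constants depending only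
on `p`, to the one-dimensional quadratic Muckenhoupt characteristic. -/
theorem stmt16 (k : ℕ) (hk : 2 ≤ k) :
    ∃ C : ℝ≥0∞, 0 < C ∧ C < ∞ ∧
      ∀ σh ωh : ℝ → ℝ≥0∞, Measurable σh → Measurable ωh →
        ArectChar (2 * k : ℝ) σh ωh ≤ C * A1dChar (2 * k : ℝ) σh ωh ∧
        A1dChar (2 * k : ℝ) σh ωh ≤ C * ArectChar (2 * k : ℝ) σh ωh := by
  have hp : (1 : ℝ) ≤ 2 * k := by
    norm_cast
    omega
  refine ⟨2, by norm_num, ofNat_lt_top, fun σh ωh hσ hω => ⟨?_, ?_⟩⟩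
  · calc ArectChar (2 * k : ℝ) σh ωh ≤ A1dChar (2 * k : ℝ) σh ωh :=
          ArectChar_le_A1dChar (by linarith) hσ hω
      _ ≤ 2 * A1dChar (2 * k : ℝ) σh ωh := le_mul_of_one_le_left' one_le_two
  · calc A1dChar (2 * k : ℝ) σh ωh
        ≤ (110 / 90) ^ (1 / (2 * k : ℝ)) * ArectChar (2 * k : ℝ) σh ωh :=
          A1dChar_le_rpow_mul_ArectChar (by linarith) hσ hω
      _ ≤ 2 * ArectChar (2 * k : ℝ) σh ωh := by
          gcongr
          exact rpow_one_div_le_two hp
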